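/- arXiv:1607.06267 — 2 statements merged into one kernel-verified Lean document; each statement's English description precedes it below -/
import Mathlib

section
/- Let μ, ν be positive finite Borel measures on ℝⁿ and ℝᵐ respectively, each without atoms, and suppose each admits a Fourier frame (i.e., there exist countable sets U ⊂ ℝⁿ, V ⊂ ℝᵐ such that the exponential systems E(U), E(V) are frames in L²(μ), L²(ν) respectively). Then the measure ρ = μ × δ₀ + δ₀ × ν on ℝⁿ⁺ᵐ = ℝⁿ × ℝᵐ also admits a Fourier frame. -/
open MeasureTheory Complex

noncomputable def fexp {d : ℕ} (l x : EuclideanSpace ℝ (Fin d)) : ℂ :=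
  Complex.exp (((2 * Real.pi * (inner ℝ l x : ℝ) : ℝ) : ℂ) * Complex.I)

noncomputable def fourierM {d : ℕ} (μ : Measure (EuclideanSpace ℝ (Fin d)))
    (t : EuclideanSpace ℝ (Fin d)) : ℂ :=
  ∫ x, Complex.exp ((((-2) * Real.pi * (inner ℝ t x : ℝ) : ℝ) : ℂ) * Complex.I) ∂μ

/-- the system `e i` is a frame in `L²(μ)` with lower bound `A` and upper bound `B`. -/
def IsFrameWith {α : Type*} [MeasurableSpace α] (μ : Measure α)
    {ι : Type*} (e : ι → α → ℂ) (A B : ℝ) : Prop :=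
  ∀ f : α → ℂ, MeasureTheory.MemLp f 2 μ →
    A * ∫ x, ‖f x‖ ^ 2 ∂μ ≤ (∑' i, ‖∫ x, f x * (starRingEnd ℂ) (e i x) ∂μ‖ ^ 2) ∧
    (∑' i, ‖∫ x, f x * (starRingEnd ℂ) (e i x) ∂μ‖ ^ 2) ≤ B * ∫ x, ‖f x‖ ^ 2 ∂μ

/-- `μ` admits a Fourier frame: a countable set `Λ ⊆ ℝ^d` of frequencies such that
the exponential system `E(Λ)` is a frame in `L²(μ)`. -/
def HasFourierFrame {d : ℕ} (μ : Measure (EuclideanSpace ℝ (Fin d))) : Prop :=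
  ∃ Λ : Set (EuclideanSpace ℝ (Fin d)), Λ.Countable ∧
    ∃ A B : ℝ, 0 < A ∧ A ≤ B ∧ IsFrameWith μ (fun l : Λ => fexp (l : EuclideanSpace ℝ (Fin d))) A B

/-!
For `f ∈ L²(ρ)` put `f₁ = f(·, 0)` and `f₂ = f(0, ·)`. Then `‖f‖²_ρ = ‖f₁‖²_μ + ‖f₂‖²_ν`, and the
coefficient of `f` at the frequency `(a, b)` is `F a + G b` with `F a = ⟨f₁, e_a⟩_μ` and
`G b = ⟨f₂, e_b⟩_ν`.

A continuous measure `μ ≠ 0` contains arbitrarily many disjoint non-null sets, so `L²(μ)` is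
infinite-dimensional and the frequency set `U` of any frame of `μ` is infinite; likewise for `V`.
Pair every `u ∈ U` with three partners `ψ(j, u) ∈ V` and every `v ∈ V` with three partners
`ψ'(j, v) ∈ U`, all distinct. Along the pairs `(u, ψ(j, u))` each `F u` occurs three times while
each `G v` occurs at most once, so `3 Σ |F u|² ≤ 2 Σ |F u + G ψ(j,u)|² + 2 Σ |G v|²`. Adding the
symmetric bound, the cross terms are absorbed and the frame sums of `U` and `V` are at most four
times the sum over the pairs. If `μ = 0` (or `ν = 0`), the frequencies `{0} × V` (or `U × {0}`)
already form a frame.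
-/

open Set Function
open scoped ENNReal

section NullSingleton

variable {α : Type*} [MeasurableSpace α] [HasCountableSeparatingOn α MeasurableSet univ]
  {μ : Measure α} [NullSingletonClass μ]

theorem exists_subset_measure_ne_zero_diff_ne_zero {s : Set α} (hs : MeasurableSet s)
    (hμs : μ s ≠ 0) : ∃ t ⊆ s, MeasurableSet t ∧ μ t ≠ 0 ∧ μ (s \ t) ≠ 0 := by
  by_contra! h
  -- Otherwise `ae (μ.restrict s)` decides every measurable set, so it lives on a subsingleton.
  have hdich : ∀ U, MeasurableSet U → U ∈ ae (μ.restrict s) ∨ Uᶜ ∈ ae (μ.restrict s) := by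
    intro U hU
    simp only [mem_ae_iff, compl_compl, Measure.restrict_apply' hs, ← sdiff_eq_compl_inter]
    by_cases hsU : μ (s ∩ U) = 0
    · right; rwa [inter_comm]
    · left; simpa using h _ inter_subset_left (hs.inter hU) hsU
  obtain ⟨t, ht, hts⟩ := Filter.exists_subsingleton_mem_of_forall_separating _ hdich
  have : μ.restrict s (t ∪ tᶜ) = 0 := measure_union_null (ht.measure_zero _) hts
  rw [union_compl_self, Measure.restrict_apply_univ] at this
  exact hμs this

theorem exists_pairwise_disjoint_measure_ne_zero (N : ℕ) {s : Set α} (hs : MeasurableSet s)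
    (hμs : μ s ≠ 0) :
    ∃ S : Fin N → Set α, (∀ j, S j ⊆ s ∧ MeasurableSet (S j) ∧ μ (S j) ≠ 0) ∧
      Pairwise (Disjoint on S) := by
  induction N generalizing s with
  | zero => exact ⟨Fin.elim0, Fin.rec0, Fin.rec0⟩
  | succ N ih =>
    obtain ⟨t, hts, ht, ht0, hst0⟩ := exists_subset_measure_ne_zero_diff_ne_zero hs hμs
    obtain ⟨S, hS, hSd⟩ := ih (hs.diff ht) hst0
    have hSt : ∀ j, Disjoint t (S j) := fun j => disjoint_sdiff_right.mono_right (hS j).1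
    refine ⟨Fin.cons t S, fun j => ?_, fun i j hij => ?_⟩
    · cases j using Fin.cases
      · exact ⟨hts, ht, ht0⟩
      · exact ⟨(hS _).1.trans sdiff_subset, (hS _).2⟩
    · cases i using Fin.cases <;> cases j using Fin.cases
      · exact absurd rfl hij
      · exact hSt _
      · exact (hSt _).symm
      · exact hSd fun h => hij (congrArg _ h)

end NullSingleton

section Frame

variable {α ι : Type*} [MeasurableSpace α] {μ : Measure α} {e : ι → α → ℂ} {A B : ℝ}
  {f : α → ℂ}

theorem integral_norm_sq_eq_zero_iff {E : Type*} [NormedAddCommGroup E] {f : α → E}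
    (hf : MemLp f 2 μ) : ∫ x, ‖f x‖ ^ 2 ∂μ = 0 ↔ f =ᵐ[μ] 0 := by
  rw [integral_eq_zero_iff_of_nonneg (fun x => by positivity)
    (hf.integrable_norm_pow two_ne_zero)]
  simp [Filter.EventuallyEq]

theorem IsFrameWith.ae_eq_zero (h : IsFrameWith μ e A B) (hA : 0 < A) (hf : MemLp f 2 μ)
    (hcoef : ∀ i, ∫ x, f x * (starRingEnd ℂ) (e i x) ∂μ = 0) : f =ᵐ[μ] 0 := by
  have hlow := (h f hf).1
  simp only [hcoef, norm_zero, zero_pow two_ne_zero, tsum_zero] at hlow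
  refine (integral_norm_sq_eq_zero_iff hf).1 (le_antisymm ?_ (integral_nonneg fun x => ?_))
  · nlinarith
  · positivity

theorem IsFrameWith.summable (h : IsFrameWith μ e A B) (hA : 0 < A) (hf : MemLp f 2 μ) :
    Summable fun i => ‖∫ x, f x * (starRingEnd ℂ) (e i x) ∂μ‖ ^ 2 := by
  rcases (integral_nonneg fun x => by positivity : 0 ≤ ∫ x, ‖f x‖ ^ 2 ∂μ).eq_or_lt with h0 | hpos
  · have hf0 := (integral_norm_sq_eq_zero_iff hf).1 h0.symm
    refine summable_zero.congr fun i => ?_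
    rw [integral_congr_ae (g := 0) (by filter_upwards [hf0] with x hx; simp [hx])]
    simp
  · by_contra hs
    have hlow := (h f hf).1
    rw [tsum_eq_zero_of_not_summable hs] at hlow
    nlinarith

theorem IsFrameWith.enorm_bounds (h : IsFrameWith μ e A B) (hA : 0 < A) (hf : MemLp f 2 μ) :
    ENNReal.ofReal (A * ∫ x, ‖f x‖ ^ 2 ∂μ) ≤ ∑' i, ‖∫ x, f x * (starRingEnd ℂ) (e i x) ∂μ‖ₑ ^ 2 ∧
      ∑' i, ‖∫ x, f x * (starRingEnd ℂ) (e i x) ∂μ‖ₑ ^ 2 ≤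
        ENNReal.ofReal (B * ∫ x, ‖f x‖ ^ 2 ∂μ) := by
  have hsum : ∑' i, ‖∫ x, f x * (starRingEnd ℂ) (e i x) ∂μ‖ₑ ^ 2 =
      ENNReal.ofReal (∑' i, ‖∫ x, f x * (starRingEnd ℂ) (e i x) ∂μ‖ ^ 2) := by
    rw [ENNReal.ofReal_tsum_of_nonneg (fun _ => by positivity) (h.summable hA hf)]
    simp [ENNReal.ofReal_pow, ofReal_norm]
  rw [hsum]
  exact ⟨ENNReal.ofReal_le_ofReal (h f hf).1, ENNReal.ofReal_le_ofReal (h f hf).2⟩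

theorem isFrameWith_of_enorm_bounds (hB : 0 ≤ B)
    (h : ∀ f : α → ℂ, MemLp f 2 μ →
      ENNReal.ofReal (A * ∫ x, ‖f x‖ ^ 2 ∂μ) ≤
          ∑' i, ‖∫ x, f x * (starRingEnd ℂ) (e i x) ∂μ‖ₑ ^ 2 ∧
        ∑' i, ‖∫ x, f x * (starRingEnd ℂ) (e i x) ∂μ‖ₑ ^ 2 ≤
          ENNReal.ofReal (B * ∫ x, ‖f x‖ ^ 2 ∂μ)) :
    IsFrameWith μ e A B := by
  intro f hf
  obtain ⟨hlow, hup⟩ := h f hf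
  have hN : 0 ≤ ∫ x, ‖f x‖ ^ 2 ∂μ := integral_nonneg fun x => by positivity
  have hsum : ∑' i, ‖∫ x, f x * (starRingEnd ℂ) (e i x) ∂μ‖ ^ 2 =
      (∑' i, ‖∫ x, f x * (starRingEnd ℂ) (e i x) ∂μ‖ₑ ^ 2).toReal := by
    rw [ENNReal.tsum_toReal_eq fun _ => by simp]
    simp
  rw [hsum]
  exact ⟨(ENNReal.ofReal_le_iff_le_toReal (ne_top_of_le_ne_top ENNReal.ofReal_ne_top hup)).1 hlow,
    ENNReal.toReal_le_of_le_ofReal (by positivity) hup⟩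

theorem IsFrameWith.infinite [IsFiniteMeasure μ] [NullSingletonClass μ]
    [HasCountableSeparatingOn α MeasurableSet univ] (h : IsFrameWith μ e A B) (hA : 0 < A)
    (hμ : μ ≠ 0) (he : ∀ i, Integrable (e i) μ) : Infinite ι := by
  by_contra hfin
  have := not_infinite_iff_finite.1 hfin
  cases nonempty_fintype ι
  obtain ⟨S, hS, hSd⟩ := exists_pairwise_disjoint_measure_ne_zero (μ := μ)
    (Fintype.card ι + 1) MeasurableSet.univ (Measure.measure_univ_ne_zero.2 hμ)
  -- More disjoint non-null sets than frame elements: some combination of their indicators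
  -- has all frame coefficients zero.
  let M : Matrix ι (Fin (Fintype.card ι + 1)) ℂ := fun i j =>
    ∫ x in S j, (starRingEnd ℂ) (e i x) ∂μ
  obtain ⟨c, hMc, hc⟩ := Submodule.exists_mem_ne_zero_of_ne_bot
    (M.mulVecLin.ker_ne_bot_of_finrank_lt (by simp))
  let g : α → ℂ := fun x => ∑ j, (S j).indicator (fun _ => c j) x
  have hg : MemLp g 2 μ :=
    memLp_finsetSum Finset.univ fun j _ => (memLp_const (c j)).indicator (hS j).2.1
  have hcoef : ∀ i, ∫ x, g x * (starRingEnd ℂ) (e i x) ∂μ = M.mulVec c i := by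
    intro i
    have hconj : Integrable (fun x => (starRingEnd ℂ) (e i x)) μ :=
      (he i).mono (continuous_conj.comp_aestronglyMeasurable (he i).1) (by simp)
    have hmul : ∀ j x, (S j).indicator (fun _ => c j) x * (starRingEnd ℂ) (e i x) =
        (S j).indicator (fun y => c j * (starRingEnd ℂ) (e i y)) x :=
      fun j x => (Set.indicator_mul_left (S j) (fun _ => c j) fun y => (starRingEnd ℂ) (e i y)).symm
    simp only [g, Finset.sum_mul, hmul]
    rw [integral_finsetSum _ fun j _ => (hconj.const_mul (c j)).indicator (hS j).2.1]
    simp only [integral_indicator (hS _).2.1, integral_const_mul, Matrix.mulVec, dotProduct, M,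
      mul_comm]
  have hg0 := h.ae_eq_zero hA hg fun i => by rw [hcoef]; exact congrFun hMc i
  obtain ⟨j, hj⟩ : ∃ j, c j ≠ 0 := Function.ne_iff.1 hc
  have hgj : ∀ x ∈ S j, g x = c j := fun x hx => by
    simp only [g]
    rw [Finset.sum_eq_single j (fun k _ hkj => indicator_of_notMem
      (disjoint_left.1 (hSd hkj.symm) hx) _) (by simp)]
    exact indicator_of_mem hx _
  refine (hS j).2.2 (measure_mono_null (fun x hx => ?_) (ae_iff.1 hg0))
  simpa [hgj x hx] using hj

end Frame

section SquareSums

variable {E : Type*} [SeminormedAddCommGroup E]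

theorem enorm_add_sq_le (x y : E) : ‖x + y‖ₑ ^ 2 ≤ 2 * (‖x‖ₑ ^ 2 + ‖y‖ₑ ^ 2) := by
  have := (pow_le_pow_left₀ zero_le (nnnorm_add_le x y) 2).trans add_sq_le
  simp only [enorm_eq_nnnorm]
  exact_mod_cast this

theorem enorm_sq_le_add (x y : E) : ‖x‖ₑ ^ 2 ≤ 2 * (‖x + y‖ₑ ^ 2 + ‖y‖ₑ ^ 2) := by
  simpa using enorm_add_sq_le (x + y) (-y)

theorem ENNReal.tsum_fin_prod_snd {ι : Type*} (k : ℕ) (g : ι → ℝ≥0∞) :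
    ∑' p : Fin k × ι, g p.2 = k * ∑' i, g i := by
  simp [ENNReal.tsum_prod (f := fun _ i => g i), tsum_fintype]

variable {ι κ : Type*} (F : ι → E) (G : κ → E) {k : ℕ} {ψ : Fin k × ι → κ}

theorem tsum_enorm_add_comp_sq_le (hψ : Injective ψ) :
    ∑' p, ‖F p.2 + G (ψ p)‖ₑ ^ 2 ≤ 2 * (k * ∑' i, ‖F i‖ₑ ^ 2 + ∑' j, ‖G j‖ₑ ^ 2) := calc
  _ ≤ ∑' p, 2 * (‖F p.2‖ₑ ^ 2 + ‖G (ψ p)‖ₑ ^ 2) :=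
    ENNReal.tsum_le_tsum fun p => enorm_add_sq_le _ _
  _ = 2 * (k * ∑' i, ‖F i‖ₑ ^ 2 + ∑' p, ‖G (ψ p)‖ₑ ^ 2) := by
    rw [ENNReal.tsum_mul_left, ENNReal.tsum_add, ENNReal.tsum_fin_prod_snd k fun i => ‖F i‖ₑ ^ 2]
  _ ≤ _ := by gcongr; exact ENNReal.tsum_comp_le_tsum_of_injective hψ _

theorem mul_tsum_enorm_sq_le (hψ : Injective ψ) :
    k * ∑' i, ‖F i‖ₑ ^ 2 ≤ 2 * (∑' p, ‖F p.2 + G (ψ p)‖ₑ ^ 2 + ∑' j, ‖G j‖ₑ ^ 2) := calc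
  _ = ∑' p : Fin k × ι, ‖F p.2‖ₑ ^ 2 := (ENNReal.tsum_fin_prod_snd k _).symm
  _ ≤ ∑' p, 2 * (‖F p.2 + G (ψ p)‖ₑ ^ 2 + ‖G (ψ p)‖ₑ ^ 2) :=
    ENNReal.tsum_le_tsum fun p => enorm_sq_le_add _ _
  _ = 2 * (∑' p, ‖F p.2 + G (ψ p)‖ₑ ^ 2 + ∑' p, ‖G (ψ p)‖ₑ ^ 2) := by
    rw [ENNReal.tsum_mul_left, ENNReal.tsum_add]
  _ ≤ _ := by gcongr; exact ENNReal.tsum_comp_le_tsum_of_injective hψ _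

end SquareSums

theorem exists_injective_of_countable (α β : Type*) [Countable α] [Infinite β] :
    ∃ f : α → β, Injective f :=
  let ⟨g, hg⟩ := Countable.exists_injective_nat α
  ⟨Infinite.natEmbedding β ∘ g, (Infinite.natEmbedding β).injective.comp hg⟩

section MixedFrequencies

variable {X Y : Type*} {U : Set X} {V : Set Y} {k : ℕ}

def mixedFrequencies (ψ : Fin k × U → V) (ψ' : Fin k × V → U) : Set (X × Y) :=
  range (fun p => ((p.2 : X), (ψ p : Y))) ∪ range (fun q => ((ψ' q : X), (q.2 : Y)))

variable {E : Type*} [SeminormedAddCommGroup E] (F : X → E) (G : Y → E)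
  {ψ : Fin k × U → V} {ψ' : Fin k × V → U}

theorem tsum_enorm_sq_range_left (hψ : Injective ψ) :
    ∑' l : range (fun p => ((p.2 : X), (ψ p : Y))), ‖F (l : X × Y).1 + G (l : X × Y).2‖ₑ ^ 2 =
      ∑' p, ‖F p.2 + G (ψ p)‖ₑ ^ 2 :=
  tsum_range (fun l : X × Y => ‖F l.1 + G l.2‖ₑ ^ 2) fun _ _ h =>
    hψ (Subtype.val_injective (Prod.ext_iff.1 h).2)

theorem tsum_enorm_sq_range_right (hψ' : Injective ψ') :
    ∑' l : range (fun q => ((ψ' q : X), (q.2 : Y))), ‖F (l : X × Y).1 + G (l : X × Y).2‖ₑ ^ 2 =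
      ∑' q, ‖G q.2 + F (ψ' q)‖ₑ ^ 2 := by
  rw [tsum_range (fun l : X × Y => ‖F l.1 + G l.2‖ₑ ^ 2) fun _ _ h =>
    hψ' (Subtype.val_injective (Prod.ext_iff.1 h).1)]
  simp only [add_comm]

theorem mul_add_le_tsum_mixedFrequencies (hψ : Injective ψ) (hψ' : Injective ψ') :
    k * (∑' u : U, ‖F u‖ₑ ^ 2 + ∑' v : V, ‖G v‖ₑ ^ 2) ≤
      4 * ∑' l : mixedFrequencies ψ ψ', ‖F (l : X × Y).1 + G (l : X × Y).2‖ₑ ^ 2 +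
        2 * (∑' u : U, ‖F u‖ₑ ^ 2 + ∑' v : V, ‖G v‖ₑ ^ 2) := by
  have h₁ := mul_tsum_enorm_sq_le (fun u : U => F u) (fun v : V => G v) hψ
  have h₂ := mul_tsum_enorm_sq_le (fun v : V => G v) (fun u : U => F u) hψ'
  rw [← tsum_enorm_sq_range_left F G hψ] at h₁
  rw [← tsum_enorm_sq_range_right F G hψ'] at h₂
  have hT₁ := ENNReal.tsum_mono_subtype (fun l : X × Y => ‖F l.1 + G l.2‖ₑ ^ 2)
    (subset_union_left : _ ⊆ mixedFrequencies ψ ψ')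
  have hT₂ := ENNReal.tsum_mono_subtype (fun l : X × Y => ‖F l.1 + G l.2‖ₑ ^ 2)
    (subset_union_right : _ ⊆ mixedFrequencies ψ ψ')
  set T := ∑' l : mixedFrequencies ψ ψ', ‖F (l : X × Y).1 + G (l : X × Y).2‖ₑ ^ 2
  calc _ = k * ∑' u : U, ‖F u‖ₑ ^ 2 + k * ∑' v : V, ‖G v‖ₑ ^ 2 := mul_add _ _ _
    _ ≤ 2 * (T + ∑' v : V, ‖G v‖ₑ ^ 2) + 2 * (T + ∑' u : U, ‖F u‖ₑ ^ 2) :=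
      add_le_add (h₁.trans (by gcongr; exact hT₁)) (h₂.trans (by gcongr; exact hT₂))
    _ = _ := by ring

theorem tsum_mixedFrequencies_le (hψ : Injective ψ) (hψ' : Injective ψ') :
    ∑' l : mixedFrequencies ψ ψ', ‖F (l : X × Y).1 + G (l : X × Y).2‖ₑ ^ 2 ≤
      2 * ((k + 1) * (∑' u : U, ‖F u‖ₑ ^ 2 + ∑' v : V, ‖G v‖ₑ ^ 2)) := by
  have h₁ := tsum_enorm_add_comp_sq_le (fun u : U => F u) (fun v : V => G v) hψ
  have h₂ := tsum_enorm_add_comp_sq_le (fun v : V => G v) (fun u : U => F u) hψ'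
  rw [← tsum_enorm_sq_range_left F G hψ] at h₁
  rw [← tsum_enorm_sq_range_right F G hψ'] at h₂
  calc _ ≤ _ := ENNReal.tsum_union_le (fun l : X × Y => ‖F l.1 + G l.2‖ₑ ^ 2) _ _
    _ ≤ _ := add_le_add h₁ h₂
    _ = _ := by ring

end MixedFrequencies

section MixedMeasure

variable {X Y : Type*} [MeasurableSpace X] [MeasurableSpace Y] [Zero X] [Zero Y]
  {μ : Measure X} {ν : Measure Y}

/-- The measure `ρ = μ × δ₀ + δ₀ × ν` on `X × Y`. -/
noncomputable def mixedMeasure (μ : Measure X) (ν : Measure Y) : Measure (X × Y) :=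
  μ.map (fun x => (x, 0)) + ν.map (fun y => (0, y))

instance [IsFiniteMeasure μ] [IsFiniteMeasure ν] : IsFiniteMeasure (mixedMeasure μ ν) := by
  unfold mixedMeasure
  infer_instance

theorem integral_mixedMeasure {E : Type*} [NormedAddCommGroup E] [NormedSpace ℝ E]
    {h : X × Y → E} (hh : Integrable h (mixedMeasure μ ν)) :
    ∫ p, h p ∂mixedMeasure μ ν = ∫ x, h (x, 0) ∂μ + ∫ y, h (0, y) ∂ν := by
  have h₁ : Integrable h (μ.map fun x => (x, 0)) := hh.mono_measure (Measure.le_add_right le_rfl)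
  have h₂ : Integrable h (ν.map fun y => (0, y)) := hh.mono_measure (Measure.le_add_left le_rfl)
  rw [mixedMeasure, integral_add_measure h₁ h₂,
    integral_map measurable_prodMk_right.aemeasurable h₁.1,
    integral_map measurable_prodMk_left.aemeasurable h₂.1]

variable {E : Type*} [NormedAddCommGroup E] {p : ℝ≥0∞} {f : X × Y → E}

theorem MeasureTheory.MemLp.mixedMeasure_left (hf : MemLp f p (mixedMeasure μ ν)) :
    MemLp (fun x => f (x, 0)) p μ := by
  have h : MemLp f p (μ.map fun x => (x, 0)) := hf.mono_measure (Measure.le_add_right le_rfl)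
  exact (memLp_map_measure_iff h.1 measurable_prodMk_right.aemeasurable).1 h

theorem MeasureTheory.MemLp.mixedMeasure_right (hf : MemLp f p (mixedMeasure μ ν)) :
    MemLp (fun y => f (0, y)) p ν := by
  have h : MemLp f p (ν.map fun y => (0, y)) := hf.mono_measure (Measure.le_add_left le_rfl)
  exact (memLp_map_measure_iff h.1 measurable_prodMk_left.aemeasurable).1 h

theorem integral_norm_sq_mixedMeasure (hf : MemLp f 2 (mixedMeasure μ ν)) :
    ∫ p, ‖f p‖ ^ 2 ∂mixedMeasure μ ν = ∫ x, ‖f (x, 0)‖ ^ 2 ∂μ + ∫ y, ‖f (0, y)‖ ^ 2 ∂ν :=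
  integral_mixedMeasure (hf.integrable_norm_pow two_ne_zero)

end MixedMeasure

section Fourier

variable {d n m : ℕ}

theorem norm_fexp (l x : EuclideanSpace ℝ (Fin d)) : ‖fexp l x‖ = 1 :=
  Complex.norm_exp_ofReal_mul_I _

theorem fexp_zero_right (l : EuclideanSpace ℝ (Fin d)) : fexp l 0 = 1 := by
  simp [fexp]

theorem continuous_fexp (l : EuclideanSpace ℝ (Fin d)) : Continuous (fexp l) := by
  unfold fexp
  fun_prop

theorem integrable_fexp {μ : Measure (EuclideanSpace ℝ (Fin d))} [IsFiniteMeasure μ]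
    (l : EuclideanSpace ℝ (Fin d)) : Integrable (fexp l) μ :=
  .of_bound (continuous_fexp l).aestronglyMeasurable 1 (ae_of_all _ fun x => (norm_fexp l x).le)

variable {μ : Measure (EuclideanSpace ℝ (Fin n))} {ν : Measure (EuclideanSpace ℝ (Fin m))}
  [IsFiniteMeasure μ] [IsFiniteMeasure ν]

theorem integral_mul_conj_fexp_mixedMeasure
    {f : EuclideanSpace ℝ (Fin n) × EuclideanSpace ℝ (Fin m) → ℂ}
    (hf : MemLp f 2 (mixedMeasure μ ν)) (a : EuclideanSpace ℝ (Fin n))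
    (b : EuclideanSpace ℝ (Fin m)) :
    ∫ p, f p * (starRingEnd ℂ) (fexp a p.1 * fexp b p.2) ∂mixedMeasure μ ν =
      ∫ x, f (x, 0) * (starRingEnd ℂ) (fexp a x) ∂μ +
        ∫ y, f (0, y) * (starRingEnd ℂ) (fexp b y) ∂ν := by
  have hint : Integrable (fun p => f p * (starRingEnd ℂ) (fexp a p.1 * fexp b p.2))
      (mixedMeasure μ ν) :=
    (hf.integrable one_le_two).mul_bdd (c := 1)
      (by have := continuous_fexp a; have := continuous_fexp b; fun_prop)
      (ae_of_all _ fun p => by simp [norm_fexp])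
  simpa [fexp_zero_right] using integral_mixedMeasure hint

end Fourier

section MixedFrame

variable {n m : ℕ} {μ : Measure (EuclideanSpace ℝ (Fin n))}
  {ν : Measure (EuclideanSpace ℝ (Fin m))} [IsFiniteMeasure μ] [IsFiniteMeasure ν]

theorem isFrameWith_mixedMeasure_zero_left {V : Set (EuclideanSpace ℝ (Fin m))} {A B : ℝ}
    (hV : IsFrameWith ν (fun v : V => fexp (v : EuclideanSpace ℝ (Fin m))) A B) :
    IsFrameWith (mixedMeasure (0 : Measure (EuclideanSpace ℝ (Fin n))) ν)
      (fun l : range fun v : V =>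
          ((0 : EuclideanSpace ℝ (Fin n)), (v : EuclideanSpace ℝ (Fin m))) =>
        fun p => fexp (l : EuclideanSpace ℝ (Fin n) × EuclideanSpace ℝ (Fin m)).1 p.1 *
          fexp (l : EuclideanSpace ℝ (Fin n) × EuclideanSpace ℝ (Fin m)).2 p.2) A B := by
  intro f hf
  simp only [integral_mul_conj_fexp_mixedMeasure hf, integral_norm_sq_mixedMeasure hf,
    integral_zero_measure, zero_add]
  rw [tsum_range (fun l : EuclideanSpace ℝ (Fin n) × EuclideanSpace ℝ (Fin m) =>
      ‖∫ y, f (0, y) * (starRingEnd ℂ) (fexp l.2 y) ∂ν‖ ^ 2)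
    fun _ _ h => Subtype.val_injective (Prod.ext_iff.1 h).2]
  exact hV _ hf.mixedMeasure_right

theorem isFrameWith_mixedMeasure_zero_right {U : Set (EuclideanSpace ℝ (Fin n))} {A B : ℝ}
    (hU : IsFrameWith μ (fun u : U => fexp (u : EuclideanSpace ℝ (Fin n))) A B) :
    IsFrameWith (mixedMeasure μ (0 : Measure (EuclideanSpace ℝ (Fin m))))
      (fun l : range fun u : U =>
          ((u : EuclideanSpace ℝ (Fin n)), (0 : EuclideanSpace ℝ (Fin m))) =>
        fun p => fexp (l : EuclideanSpace ℝ (Fin n) × EuclideanSpace ℝ (Fin m)).1 p.1 *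
          fexp (l : EuclideanSpace ℝ (Fin n) × EuclideanSpace ℝ (Fin m)).2 p.2) A B := by
  intro f hf
  simp only [integral_mul_conj_fexp_mixedMeasure hf, integral_norm_sq_mixedMeasure hf,
    integral_zero_measure, add_zero]
  rw [tsum_range (fun l : EuclideanSpace ℝ (Fin n) × EuclideanSpace ℝ (Fin m) =>
      ‖∫ x, f (x, 0) * (starRingEnd ℂ) (fexp l.1 x) ∂μ‖ ^ 2)
    fun _ _ h => Subtype.val_injective (Prod.ext_iff.1 h).1]
  exact hU _ hf.mixedMeasure_left

theorem isFrameWith_mixedMeasure {U : Set (EuclideanSpace ℝ (Fin n))}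
    {V : Set (EuclideanSpace ℝ (Fin m))} {A₁ B₁ A₂ B₂ : ℝ}
    (hU : IsFrameWith μ (fun u : U => fexp (u : EuclideanSpace ℝ (Fin n))) A₁ B₁)
    (hV : IsFrameWith ν (fun v : V => fexp (v : EuclideanSpace ℝ (Fin m))) A₂ B₂)
    (hA₁ : 0 < A₁) (hA₂ : 0 < A₂) (hB₁ : 0 ≤ B₁) (hB₂ : 0 ≤ B₂)
    {ψ : Fin 3 × U → V} {ψ' : Fin 3 × V → U} (hψ : Injective ψ) (hψ' : Injective ψ') :
    IsFrameWith (mixedMeasure μ ν)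
      (fun l : mixedFrequencies ψ ψ' =>
        fun p => fexp (l : EuclideanSpace ℝ (Fin n) × EuclideanSpace ℝ (Fin m)).1 p.1 *
          fexp (l : EuclideanSpace ℝ (Fin n) × EuclideanSpace ℝ (Fin m)).2 p.2)
      (min A₁ A₂ / 4) (8 * (B₁ + B₂)) := by
  refine isFrameWith_of_enorm_bounds (by positivity) fun f hf => ?_
  obtain ⟨hU₁, hU₂⟩ := hU.enorm_bounds hA₁ hf.mixedMeasure_left
  obtain ⟨hV₁, hV₂⟩ := hV.enorm_bounds hA₂ hf.mixedMeasure_right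
  simp only [integral_mul_conj_fexp_mixedMeasure hf, integral_norm_sq_mixedMeasure hf]
  set F := fun a => ∫ x, f (x, 0) * (starRingEnd ℂ) (fexp a x) ∂μ
  set G := fun b => ∫ y, f (0, y) * (starRingEnd ℂ) (fexp b y) ∂ν
  have hlow := mul_add_le_tsum_mixedFrequencies F G hψ hψ'
  have hup := tsum_mixedFrequencies_le F G hψ hψ'
  set a := ∑' u : U, ‖F u‖ₑ ^ 2
  set b := ∑' v : V, ‖G v‖ₑ ^ 2
  set T := ∑' l : mixedFrequencies ψ ψ',
    ‖F (l : EuclideanSpace ℝ (Fin n) × EuclideanSpace ℝ (Fin m)).1 +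
      G (l : EuclideanSpace ℝ (Fin n) × EuclideanSpace ℝ (Fin m)).2‖ₑ ^ 2
  set N₁ := ∫ x, ‖f (x, 0)‖ ^ 2 ∂μ
  set N₂ := ∫ y, ‖f (0, y)‖ ^ 2 ∂ν
  have hN₁ : 0 ≤ N₁ := integral_nonneg fun x => by positivity
  have hN₂ : 0 ≤ N₂ := integral_nonneg fun y => by positivity
  constructor
  · -- `a + b` is finite, so it cancels from `3 (a + b) ≤ 4 T + 2 (a + b)`.
    have hab : 2 * (a + b) ≠ ⊤ :=
      ENNReal.mul_ne_top ENNReal.ofNat_ne_top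
        (ne_top_of_le_ne_top (by finiteness) (add_le_add hU₂ hV₂))
    have h4 : a + b ≤ 4 * T := ENNReal.le_of_add_le_add_right hab (by
      convert hlow using 1
      push_cast
      ring)
    calc ENNReal.ofReal (min A₁ A₂ / 4 * (N₁ + N₂))
        ≤ ENNReal.ofReal ((A₁ * N₁ + A₂ * N₂) / 4) := by
          gcongr
          nlinarith [min_le_left A₁ A₂, min_le_right A₁ A₂]
      _ = (ENNReal.ofReal (A₁ * N₁) + ENNReal.ofReal (A₂ * N₂)) / 4 := by
          rw [ENNReal.ofReal_div_of_pos four_pos,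
            ENNReal.ofReal_add (by positivity) (by positivity)]
          norm_num
      _ ≤ (a + b) / 4 := by gcongr
      _ ≤ T := ENNReal.div_le_of_le_mul' h4
  · calc T ≤ 8 * (a + b) := by
          convert hup using 1
          push_cast
          ring
      _ ≤ 8 * (ENNReal.ofReal (B₁ * N₁) + ENNReal.ofReal (B₂ * N₂)) := by gcongr
      _ = ENNReal.ofReal (8 * (B₁ * N₁ + B₂ * N₂)) := by
          rw [ENNReal.ofReal_mul (by norm_num : (0 : ℝ) ≤ 8),
            ENNReal.ofReal_add (by positivity) (by positivity)]
          norm_num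
      _ ≤ ENNReal.ofReal (8 * (B₁ + B₂) * (N₁ + N₂)) :=
          ENNReal.ofReal_le_ofReal (by nlinarith [mul_nonneg hB₁ hN₂, mul_nonneg hB₂ hN₁])

end MixedFrame

/-- Theorem 2.1: if continuous measures `μ` on ℝⁿ and `ν` on ℝᵐ each admit a Fourier
frame, then `ρ = μ × δ₀ + δ₀ × ν` admits a Fourier frame on ℝⁿ × ℝᵐ. -/
theorem mixed_type_measure_hasFourierFrame {n m : ℕ}
    (μ : Measure (EuclideanSpace ℝ (Fin n))) (ν : Measure (EuclideanSpace ℝ (Fin m)))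
    [IsFiniteMeasure μ] [IsFiniteMeasure ν] [NullSingletonClass μ] [NullSingletonClass ν]
    (hμ : HasFourierFrame μ) (hν : HasFourierFrame ν) :
    ∃ Λ : Set (EuclideanSpace ℝ (Fin n) × EuclideanSpace ℝ (Fin m)), Λ.Countable ∧
      ∃ A B : ℝ, 0 < A ∧ A ≤ B ∧
        IsFrameWith
          (Measure.map (fun x => (x, (0 : EuclideanSpace ℝ (Fin m)))) μ
            + Measure.map (fun y => ((0 : EuclideanSpace ℝ (Fin n)), y)) ν)
          (fun l : Λ => fun p => fexp (l : EuclideanSpace ℝ (Fin n) × EuclideanSpace ℝ (Fin m)).1 p.1 *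
            fexp (l : EuclideanSpace ℝ (Fin n) × EuclideanSpace ℝ (Fin m)).2 p.2) A B := by
  obtain ⟨U, hUc, A₁, B₁, hA₁, hAB₁, hU⟩ := hμ
  obtain ⟨V, hVc, A₂, B₂, hA₂, hAB₂, hV⟩ := hν
  have := hUc.to_subtype
  have := hVc.to_subtype
  rcases eq_or_ne μ 0 with rfl | hμ0
  · exact ⟨_, countable_range _, A₂, B₂, hA₂, hAB₂, isFrameWith_mixedMeasure_zero_left hV⟩
  rcases eq_or_ne ν 0 with rfl | hν0
  · exact ⟨_, countable_range _, A₁, B₁, hA₁, hAB₁, isFrameWith_mixedMeasure_zero_right hU⟩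
  have := hU.infinite hA₁ hμ0 fun _ => integrable_fexp _
  have := hV.infinite hA₂ hν0 fun _ => integrable_fexp _
  obtain ⟨ψ, hψ⟩ := exists_injective_of_countable (Fin 3 × U) V
  obtain ⟨ψ', hψ'⟩ := exists_injective_of_countable (Fin 3 × V) U
  refine ⟨mixedFrequencies ψ ψ', (countable_range _).union (countable_range _), min A₁ A₂ / 4,
    8 * (B₁ + B₂), by positivity, ?_, isFrameWith_mixedMeasure hU hV hA₁ hA₂
      (hA₁.le.trans hAB₁) (hA₂.le.trans hAB₂) hψ hψ'⟩
  linarith [min_le_left A₁ A₂]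
end

section
/- Let ν be a finite complex Borel measure on ℝ^d, 0 < β ≤ d, satisfying |ν̂(t)| ≤ C₁|t|^{−β/2} for all t ≠ 0. Let Λ ⊂ ℝ^d satisfy #(Λ ∩ B(0,r)) ≤ C r^α for all r ≥ 1 with α < β. Then for any R ≥ 1 and any point t₀ with |t₀ − λ| ≥ T for all λ ∈ Λ ∩ B(0,R) (where 1 ≤ T ≤ R), one has Σ_{λ∈Λ} |ν̂(t₀−λ)|² ≤ C' (R^α T^{−β} + R^{α−β}) for a constant C' depending only on C, C₁, α, β. -/
open MeasureTheory Complex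

open scoped ENNReal

/-! Split `Λ` into `Λ ∩ B(0,R)` and the dyadic annuli `2ᵏR ≤ |λ| < 2ᵏ⁺¹R`. On the ball every
term is at most `C₁² T^{-β}` by the separation, and there are at most `C R^α` terms. On the
`k`-th annulus `|t₀ - λ| ≥ 2ᵏR/2`, so the block is at most `C C₁² (2ᵏ⁺¹R)^α (2ᵏR/2)^{-β}`,
which is `2^{(α-β)k}` times `O(R^{α-β})`; as `α < β` these blocks form a convergent geometric
series. -/

lemma tsum_ofReal_le_of_ncard_le {ι : Type*} {s : Set ι} (hs : s.Finite) {g : ι → ℝ} {N B : ℝ}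
    (hN : (s.ncard : ℝ) ≤ N) (hg : ∀ l ∈ s, g l ≤ B) :
    ∑' l : s, ENNReal.ofReal (g l) ≤ ENNReal.ofReal (N * B) := by
  have := hs.fintype
  calc ∑' l : s, ENNReal.ofReal (g l) = ∑ l : s, ENNReal.ofReal (g l) := tsum_fintype _
    _ ≤ ∑ _l : s, ENNReal.ofReal B := Finset.sum_le_sum fun l _ ↦ ENNReal.ofReal_le_ofReal (hg l l.2)
    _ = ENNReal.ofReal s.ncard * ENNReal.ofReal B := by
        rw [Finset.sum_const, nsmul_eq_mul, Finset.card_univ, ENNReal.ofReal_natCast,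
          Set.ncard_eq_toFinset_card' s, Set.toFinset_card]
    _ ≤ ENNReal.ofReal N * ENNReal.ofReal B := by gcongr
    _ = ENNReal.ofReal (N * B) := (ENNReal.ofReal_mul ((Nat.cast_nonneg _).trans hN)).symm

lemma tsum_le_of_tsum_ofReal_le {ι : Type*} {g : ι → ℝ} {M : ℝ} (hg : ∀ i, 0 ≤ g i)
    (hM : 0 ≤ M) (h : ∑' i, ENNReal.ofReal (g i) ≤ ENNReal.ofReal M) : ∑' i, g i ≤ M := by
  have hfin : ∀ i, ENNReal.ofReal (g i) ≠ ∞ := fun _ ↦ ENNReal.ofReal_ne_top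
  calc ∑' i, g i = (∑' i, ENNReal.ofReal (g i)).toReal := by
        simp only [ENNReal.tsum_toReal_eq hfin, ENNReal.toReal_ofReal (hg _)]
    _ ≤ (ENNReal.ofReal M).toReal := ENNReal.toReal_mono ENNReal.ofReal_ne_top h
    _ = M := ENNReal.toReal_ofReal hM

def dyadicAnnulus {E : Type*} [Norm E] (R : ℝ) (k : ℕ) : Set E :=
  (‖·‖) ⁻¹' Set.Ico (2 ^ k * R) (2 ^ (k + 1) * R)

lemma subset_iUnion_dyadicAnnulus {E : Type*} [Norm E] {R : ℝ} (hR : 0 < R) :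
    {x : E | R ≤ ‖x‖} ⊆ ⋃ k : ℕ, dyadicAnnulus R k := by
  intro x hx
  obtain ⟨k, hk₁, hk₂⟩ := exists_nat_pow_near ((one_le_div hR).2 hx) (one_lt_two (α := ℝ))
  exact Set.mem_iUnion.2 ⟨k, (le_div_iff₀ hR).1 hk₁, (div_lt_iff₀ hR).1 hk₂⟩

lemma two_mul_rpow_mul_div_two_rpow_neg {x R : ℝ} (hx : 0 < x) (hR : 0 < R) (α β : ℝ) :
    (2 * x * R) ^ α * (x * R / 2) ^ (-β) = 2 ^ (α + β) * R ^ (α - β) * x ^ (α - β) := by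
  rw [Real.mul_rpow (by positivity) hR.le, Real.mul_rpow zero_le_two hx.le,
    Real.div_rpow (by positivity) zero_le_two, Real.mul_rpow hx.le hR.le,
    Real.rpow_add two_pos, Real.rpow_sub hR, Real.rpow_sub hx, Real.rpow_neg hx.le,
    Real.rpow_neg hR.le, Real.rpow_neg zero_le_two]
  field_simp

def HasBallCountBound {E : Type*} [SeminormedAddCommGroup E] (Λ : Set E) (C α : ℝ) : Prop :=
  ∀ r : ℝ, 1 ≤ r → (Λ ∩ Metric.ball 0 r).Finite ∧ ((Λ ∩ Metric.ball 0 r).ncard : ℝ) ≤ C * r ^ α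

section DecaySum

variable {E : Type*} [SeminormedAddCommGroup E] {Λ : Set E} {g : E → ℝ} {t₀ : E} {K β C α : ℝ}

lemma le_mul_rpow_neg_of_le_norm_sub (hK : 0 ≤ K) (hβ : 0 ≤ β)
    (hdecay : ∀ l, t₀ - l ≠ 0 → g l ≤ K * ‖t₀ - l‖ ^ (-β)) {l : E} {s : ℝ} (hs : 0 < s)
    (hsl : s ≤ ‖t₀ - l‖) : g l ≤ K * s ^ (-β) := by
  have hne : t₀ - l ≠ 0 := by
    rintro h
    rw [h, norm_zero] at hsl
    linarith
  exact (hdecay l hne).trans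
    (mul_le_mul_of_nonneg_left (Real.rpow_le_rpow_of_nonpos hs hsl (neg_nonpos.2 hβ)) hK)

lemma HasBallCountBound.nonneg (hcount : HasBallCountBound Λ C α) : 0 ≤ C := by
  simpa using (Nat.cast_nonneg _).trans (hcount 1 le_rfl).2

lemma tsum_inter_ball_le (hK : 0 ≤ K) (hβ : 0 ≤ β)
    (hdecay : ∀ l, t₀ - l ≠ 0 → g l ≤ K * ‖t₀ - l‖ ^ (-β))
    (hcount : HasBallCountBound Λ C α)
    {R T : ℝ} (hR : 1 ≤ R) (hT : 0 < T) (hsep : ∀ l ∈ Λ ∩ Metric.ball 0 R, T ≤ ‖t₀ - l‖) :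
    ∑' l : ↥(Λ ∩ Metric.ball 0 R), ENNReal.ofReal (g l) ≤
      ENNReal.ofReal (C * R ^ α * (K * T ^ (-β))) :=
  tsum_ofReal_le_of_ncard_le (hcount R hR).1 (hcount R hR).2
    fun l hl ↦ le_mul_rpow_neg_of_le_norm_sub hK hβ hdecay hT (hsep l hl)

lemma tsum_inter_dyadicAnnulus_le (hK : 0 ≤ K) (hβ : 0 ≤ β)
    (hdecay : ∀ l, t₀ - l ≠ 0 → g l ≤ K * ‖t₀ - l‖ ^ (-β))
    (hcount : HasBallCountBound Λ C α)
    {R : ℝ} (hR : 1 ≤ R) (ht₀ : ‖t₀‖ ≤ R / 2) (k : ℕ) :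
    ∑' l : ↥(Λ ∩ dyadicAnnulus R k), ENNReal.ofReal (g l) ≤
      ENNReal.ofReal (C * K * 2 ^ (α + β) * R ^ (α - β) * (2 ^ (α - β)) ^ k) := by
  have h2k : (1 : ℝ) ≤ 2 ^ k := one_le_pow₀ one_le_two
  have hr : 1 ≤ 2 ^ (k + 1) * R := by
    rw [pow_succ]
    nlinarith
  have hsub : Λ ∩ dyadicAnnulus R k ⊆ Λ ∩ Metric.ball 0 (2 ^ (k + 1) * R) :=
    fun l hl ↦ ⟨hl.1, mem_ball_zero_iff.2 hl.2.2⟩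
  have hfin := (hcount _ hr).1.subset hsub
  have hcard := (Nat.cast_le.2 (Set.ncard_le_ncard hsub (hcount _ hr).1)).trans (hcount _ hr).2
  have hdist : ∀ l ∈ Λ ∩ dyadicAnnulus R k, 2 ^ k * R / 2 ≤ ‖t₀ - l‖ := fun l hl ↦ by
    have := norm_sub_norm_le l t₀
    rw [norm_sub_rev] at this
    nlinarith [hl.2.1]
  refine (tsum_ofReal_le_of_ncard_le hfin hcard fun l hl ↦ le_mul_rpow_neg_of_le_norm_sub hK hβ
    hdecay (by positivity) (hdist l hl)).trans (ENNReal.ofReal_le_ofReal (le_of_eq ?_))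
  calc C * (2 ^ (k + 1) * R) ^ α * (K * (2 ^ k * R / 2) ^ (-β))
      = C * K * ((2 * 2 ^ k * R) ^ α * (2 ^ k * R / 2) ^ (-β)) := by rw [pow_succ']; ring
    _ = C * K * 2 ^ (α + β) * R ^ (α - β) * (2 ^ (α - β)) ^ k := by
      rw [two_mul_rpow_mul_div_two_rpow_neg (by positivity) (by positivity),
        Real.rpow_pow_comm zero_le_two]
      ring

lemma tsum_diff_ball_le (hK : 0 ≤ K) (hβ : 0 ≤ β)
    (hdecay : ∀ l, t₀ - l ≠ 0 → g l ≤ K * ‖t₀ - l‖ ^ (-β))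
    (hcount : HasBallCountBound Λ C α)
    (hαβ : α < β) {R : ℝ} (hR : 1 ≤ R) (ht₀ : ‖t₀‖ ≤ R / 2) :
    ∑' l : ↥(Λ \ Metric.ball 0 R), ENNReal.ofReal (g l) ≤
      ENNReal.ofReal (C * K * 2 ^ (α + β) * R ^ (α - β) / (1 - 2 ^ (α - β))) := by
  set q : ℝ := 2 ^ (α - β)
  set A : ℝ := C * K * 2 ^ (α + β) * R ^ (α - β)
  have hq0 : 0 ≤ q := by positivity
  have hq1 : q < 1 := Real.rpow_lt_one_of_one_lt_of_neg one_lt_two (by linarith)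
  have hA : 0 ≤ A := by have := hcount.nonneg; positivity
  have hcover : Λ \ Metric.ball 0 R ⊆ ⋃ k : ℕ, Λ ∩ dyadicAnnulus R k := by
    rw [← Set.inter_iUnion]
    exact fun l hl ↦ ⟨hl.1, subset_iUnion_dyadicAnnulus (by linarith)
      (not_lt.1 fun h ↦ hl.2 (mem_ball_zero_iff.2 h))⟩
  calc ∑' l : ↥(Λ \ Metric.ball 0 R), ENNReal.ofReal (g l)
      ≤ ∑' k : ℕ, ∑' l : ↥(Λ ∩ dyadicAnnulus R k), ENNReal.ofReal (g l) :=
        (ENNReal.tsum_mono_subtype (ENNReal.ofReal ∘ g) hcover).trans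
          (ENNReal.tsum_iUnion_le_tsum (ENNReal.ofReal ∘ g) _)
    _ ≤ ∑' k : ℕ, ENNReal.ofReal (A * q ^ k) :=
        ENNReal.tsum_le_tsum (tsum_inter_dyadicAnnulus_le hK hβ hdecay hcount hR ht₀)
    _ = ENNReal.ofReal (A / (1 - q)) := by
        rw [← ENNReal.ofReal_tsum_of_nonneg (fun k ↦ by positivity)
            ((summable_geometric_of_lt_one hq0 hq1).mul_left A),
          tsum_mul_left, tsum_geometric_of_lt_one hq0 hq1, div_eq_mul_inv]

theorem tsum_le_of_decay_of_ncard_le (hK : 0 ≤ K) (hβ : 0 ≤ β)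
    (hdecay : ∀ l, t₀ - l ≠ 0 → g l ≤ K * ‖t₀ - l‖ ^ (-β))
    (hcount : HasBallCountBound Λ C α)
    (hαβ : α < β) (hg : ∀ l, 0 ≤ g l) {R T : ℝ} (hR : 1 ≤ R) (hT : 0 < T)
    (ht₀ : ‖t₀‖ ≤ R / 2) (hsep : ∀ l ∈ Λ ∩ Metric.ball 0 R, T ≤ ‖t₀ - l‖) :
    ∑' l : Λ, g l ≤ C * K * (R ^ α * T ^ (-β) + 2 ^ (α + β) / (1 - 2 ^ (α - β)) * R ^ (α - β)) := by
  have hC := hcount.nonneg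
  have hq1 : (2 : ℝ) ^ (α - β) < 1 := Real.rpow_lt_one_of_one_lt_of_neg one_lt_two (by linarith)
  have hq : 0 ≤ 1 - (2 : ℝ) ^ (α - β) := by linarith
  refine tsum_le_of_tsum_ofReal_le (fun l ↦ hg l) (by positivity) ?_
  calc ∑' l : Λ, ENNReal.ofReal (g l)
      ≤ ∑' l : ↥((Λ ∩ Metric.ball 0 R) ∪ (Λ \ Metric.ball 0 R)), ENNReal.ofReal (g l) :=
        ENNReal.tsum_mono_subtype (ENNReal.ofReal ∘ g) (Set.inter_union_sdiff Λ _).ge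
    _ ≤ ∑' l : ↥(Λ ∩ Metric.ball 0 R), ENNReal.ofReal (g l) +
          ∑' l : ↥(Λ \ Metric.ball 0 R), ENNReal.ofReal (g l) :=
          ENNReal.tsum_union_le (ENNReal.ofReal ∘ g) _ _
    _ ≤ ENNReal.ofReal (C * R ^ α * (K * T ^ (-β))) +
          ENNReal.ofReal (C * K * 2 ^ (α + β) * R ^ (α - β) / (1 - 2 ^ (α - β))) :=
        add_le_add (tsum_inter_ball_le hK hβ hdecay hcount hR hT hsep)
          (tsum_diff_ball_le hK hβ hdecay hcount hαβ hR ht₀)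
    _ = _ := by
        rw [← ENNReal.ofReal_add (by positivity) (by positivity)]
        congr 1
        ring

end DecaySum

theorem tail_sum_estimate_general {d : ℕ} (μ : Measure (EuclideanSpace ℝ (Fin d)))
    (φ : EuclideanSpace ℝ (Fin d) → ℂ)
    (β : ℝ) (hβ0 : 0 < β) (C₁ : ℝ)
    (hdecay : ∀ t : EuclideanSpace ℝ (Fin d), t ≠ 0 →
      ‖∫ x, Complex.exp ((((-2) * Real.pi * (inner ℝ t x : ℝ) : ℝ) : ℂ) * Complex.I) * φ x ∂μ‖
        ≤ C₁ * ‖t‖ ^ (-(β / 2)))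
    (Λ : Set (EuclideanSpace ℝ (Fin d))) (C α : ℝ) (hαβ : α < β)
    (hcount : ∀ r : ℝ, 1 ≤ r →
      (Λ ∩ Metric.ball (0 : EuclideanSpace ℝ (Fin d)) r).Finite ∧
      ((Λ ∩ Metric.ball (0 : EuclideanSpace ℝ (Fin d)) r).ncard : ℝ) ≤ C * r ^ α) :
    ∃ C' : ℝ, 0 < C' ∧ ∀ R T : ℝ, 1 ≤ R → 1 ≤ T → T ≤ R →
      ∀ t₀ : EuclideanSpace ℝ (Fin d), ‖t₀‖ ≤ R / 2 →
        (∀ l ∈ Λ ∩ Metric.ball (0 : EuclideanSpace ℝ (Fin d)) R, T ≤ ‖t₀ - l‖) →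
        (∑' l : Λ, ‖∫ x, Complex.exp ((((-2) * Real.pi *
            (inner ℝ (t₀ - (l : EuclideanSpace ℝ (Fin d))) x : ℝ) : ℝ) : ℂ) * Complex.I)
              * φ x ∂μ‖ ^ 2)
          ≤ C' * (R ^ α * T ^ (-β) + R ^ (α - β)) := by
  have hC := HasBallCountBound.nonneg hcount
  have hq1 : (2 : ℝ) ^ (α - β) < 1 := Real.rpow_lt_one_of_one_lt_of_neg one_lt_two (by linarith)
  set c : ℝ := 2 ^ (α + β) / (1 - 2 ^ (α - β))
  have hc : 0 ≤ c := div_nonneg (by positivity) (by linarith)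
  refine ⟨C * C₁ ^ 2 * (1 + c) + 1, by positivity, fun R T hR hT _ t₀ ht₀ hsep ↦ ?_⟩
  have hdecay_sq : ∀ l, t₀ - l ≠ 0 →
      ‖∫ x, Complex.exp ((((-2) * Real.pi * (inner ℝ (t₀ - l) x : ℝ) : ℝ) : ℂ) * Complex.I)
        * φ x ∂μ‖ ^ 2 ≤ C₁ ^ 2 * ‖t₀ - l‖ ^ (-β) := fun l hl ↦ by
    refine (pow_le_pow_left₀ (norm_nonneg _) (hdecay _ hl) 2).trans_eq ?_
    rw [mul_pow, ← Real.rpow_mul_natCast (norm_nonneg _)]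
    norm_num
  have hX : 0 ≤ R ^ α * T ^ (-β) := by positivity
  have hY : 0 ≤ R ^ (α - β) := by positivity
  calc _ ≤ C * C₁ ^ 2 * (R ^ α * T ^ (-β) + c * R ^ (α - β)) :=
        tsum_le_of_decay_of_ncard_le (sq_nonneg C₁) hβ0.le hdecay_sq hcount hαβ
          (fun _ ↦ by positivity) hR (by linarith) ht₀ hsep
    _ ≤ (C * C₁ ^ 2 * (1 + c) + 1) * (R ^ α * T ^ (-β) + R ^ (α - β)) := by
        have hCK : 0 ≤ C * C₁ ^ 2 := by positivity
        nlinarith [mul_nonneg hCK hX, mul_nonneg hCK hY, mul_nonneg (mul_nonneg hCK hc) hX]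

/-- Tail estimate: if a finite complex measure `ν` (given by an integrable density `φ` with
respect to a finite positive measure `μ`) has Fourier decay `|ν̂(t)| ≤ C₁|t|^{−β/2}` and
`#(Λ ∩ B(0,r)) ≤ C r^α` with `α < β`, then for `1 ≤ T ≤ R` and any `t₀ ∈ B(0, R/2)` at
distance `≥ T` from `Λ ∩ B(0,R)` one has
`Σ_{λ∈Λ} |ν̂(t₀−λ)|² ≤ C' (R^α T^{−β} + R^{α−β})`. -/
theorem tail_sum_estimate {d : ℕ} (μ : Measure (EuclideanSpace ℝ (Fin d)))
    [IsFiniteMeasure μ] (φ : EuclideanSpace ℝ (Fin d) → ℂ)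
    (hφ : MeasureTheory.Integrable φ μ)
    (β : ℝ) (hβ0 : 0 < β) (hβd : β ≤ (d : ℝ)) (C₁ : ℝ)
    (hdecay : ∀ t : EuclideanSpace ℝ (Fin d), t ≠ 0 →
      ‖∫ x, Complex.exp ((((-2) * Real.pi * (inner ℝ t x : ℝ) : ℝ) : ℂ) * Complex.I) * φ x ∂μ‖
        ≤ C₁ * ‖t‖ ^ (-(β / 2)))
    (Λ : Set (EuclideanSpace ℝ (Fin d))) (C α : ℝ) (hαβ : α < β)
    (hcount : ∀ r : ℝ, 1 ≤ r →
      (Λ ∩ Metric.ball (0 : EuclideanSpace ℝ (Fin d)) r).Finite ∧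
      ((Λ ∩ Metric.ball (0 : EuclideanSpace ℝ (Fin d)) r).ncard : ℝ) ≤ C * r ^ α) :
    ∃ C' : ℝ, 0 < C' ∧ ∀ R T : ℝ, 1 ≤ R → 1 ≤ T → T ≤ R →
      ∀ t₀ : EuclideanSpace ℝ (Fin d), ‖t₀‖ ≤ R / 2 →
        (∀ l ∈ Λ ∩ Metric.ball (0 : EuclideanSpace ℝ (Fin d)) R, T ≤ ‖t₀ - l‖) →
        (∑' l : Λ, ‖∫ x, Complex.exp ((((-2) * Real.pi *
            (inner ℝ (t₀ - (l : EuclideanSpace ℝ (Fin d))) x : ℝ) : ℝ) : ℂ) * Complex.I)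
              * φ x ∂μ‖ ^ 2)
          ≤ C' * (R ^ α * T ^ (-β) + R ^ (α - β)) :=
  tail_sum_estimate_general μ φ β hβ0 C₁ hdecay Λ C α hαβ hcount
end
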